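/- Alias method correctness: given a probability distribution p on {0, ..., n−1} with n ≥ 1, there exist arrays prob : Fin n → [0,1] and alias : Fin n → Fin n such that sampling by (i) choosing i uniformly from Fin n, (ii) choosing a uniform U in [0,1], and (iii) returning i if U < prob(i) and alias(i) otherwise, produces exactly the distribution p; i.e., for every j, (1/n)·(prob(j) + ∑_{i : alias(i) = j} (1 − prob(i))) = p(j). -/
import Mathlib

open Finset

lemma alias_aux (n : ℕ) (hn : 0 < n) :
    ∀ m : ℕ, ∀ s : Finset (Fin n), s.card = m →
    ∀ f : Fin n → ℝ, (∀ i ∈ s, 0 ≤ f i) → ∑ i ∈ s, f i = (s.card : ℝ) / n →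
    ∃ (prob : Fin n → ℝ) (al : Fin n → Fin n),
      (∀ i, prob i ∈ Set.Icc (0:ℝ) 1) ∧ (∀ i ∉ s, prob i = 1) ∧
      (∀ i ∈ s, al i ∈ s) ∧
      ∀ j ∈ s, (1 / (n:ℝ)) *
          (prob j + ∑ i ∈ s.filter (fun i => al i = j), (1 - prob i)) = f j := by
  have hn' : (n:ℝ) ≠ 0 := Nat.cast_ne_zero.mpr hn.ne'
  intro m
  induction m with
  | zero =>
    intro s hs f _ _
    rw [Finset.card_eq_zero] at hs
    subst hs
    exact ⟨fun _ => 1, id, fun i => ⟨zero_le_one, le_refl 1⟩,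
      fun i _ => rfl, by simp, by simp⟩
  | succ m IH =>
    intro s hs f hf0 hfsum
    have hne : s.Nonempty := Finset.card_pos.mp (by omega)
    -- pick j with f j ≤ 1/n
    obtain ⟨j, hj, hjle⟩ : ∃ j ∈ s, f j ≤ 1 / n := by
      obtain ⟨j, hj, hle⟩ := Finset.exists_le_of_sum_le hne
        (by rw [hfsum, Finset.sum_const, nsmul_eq_mul, mul_one_div] :
          ∑ i ∈ s, f i ≤ ∑ _i ∈ s, (1:ℝ)/n)
      exact ⟨j, hj, hle⟩
    by_cases hm : m = 0
    · -- singleton case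
      subst hm
      obtain ⟨j', hs'⟩ := Finset.card_eq_one.mp hs
      subst hs'
      simp only [Finset.mem_singleton] at hj
      subst hj
      have hfj : f j = 1 / n := by
        simpa [one_div] using hfsum
      refine ⟨fun _ => 1, id, fun i => ⟨zero_le_one, le_refl 1⟩, fun i _ => rfl,
        by simp, ?_⟩
      intro j' hj'
      simp only [Finset.mem_singleton] at hj'
      subst hj'
      simp [hfj]
    · -- general case : card ≥ 2
      set s' := s.erase j with hs'def
      have hjs' : j ∉ s' := Finset.notMem_erase j s
      have hcard' : s'.card = m := by
        rw [hs'def, Finset.card_erase_of_mem hj, hs]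
        omega
      have hins : insert j s' = s := Finset.insert_erase hj
      have hne' : s'.Nonempty := Finset.card_pos.mp (by omega)
      have hsum' : ∑ i ∈ s', f i = ((m:ℝ) + 1) / n - f j := by
        have := Finset.sum_erase_add s f hj
        rw [← hs'def] at this
        have h2 : (s.card : ℝ) = (m:ℝ) + 1 := by rw [hs]; push_cast; ring
        rw [h2] at hfsum
        linarith [this, hfsum]
      -- pick k ∈ s' with 1/n ≤ f k
      obtain ⟨k, hk, hkge⟩ : ∃ k ∈ s', 1 / n ≤ f k := by
        obtain ⟨k, hk, hle⟩ := Finset.exists_le_of_sum_le hne'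
          (show ∑ _i ∈ s', (1:ℝ)/n ≤ ∑ i ∈ s', f i by
            rw [Finset.sum_const, nsmul_eq_mul, mul_one_div, hcard', hsum']
            have h1 : ((m:ℝ)+1)/n - (m:ℝ)/n = 1/n := by
              rw [div_sub_div_same]; ring_nf
            linarith)
        exact ⟨k, hk, hle⟩
      have hkj : k ≠ j := Finset.ne_of_mem_erase hk
      -- define new weight function
      set f' := Function.update f k (f k + f j - 1/n) with hf'def
      have hf'0 : ∀ i ∈ s', 0 ≤ f' i := by
        intro i hi
        rcases eq_or_ne i k with hik | hik
        · rw [hf'def, hik, Function.update_self]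
          have := hf0 j hj
          linarith
        · rw [hf'def, Function.update_of_ne hik]
          exact hf0 i (Finset.mem_of_mem_erase hi)
      have hf'sum : ∑ i ∈ s', f' i = (s'.card : ℝ) / n := by
        rw [hcard']
        have h3 : ∑ i ∈ s', f' i = ∑ i ∈ s', f i + (f j - 1/n) := by
          rw [hf'def, Finset.sum_update_of_mem hk, ← Finset.sum_erase_add s' f hk]
          simp [Finset.sdiff_singleton_eq_erase]
          ring
        rw [h3, hsum']
        field_simp
        ring
      obtain ⟨prob', al', hP01, hPout, halmem, hmain⟩ := IH s' hcard' f' hf'0 hf'sum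
      refine ⟨Function.update prob' j ((n:ℝ) * f j), Function.update al' j k, ?_, ?_, ?_, ?_⟩
      · intro i
        rcases eq_or_ne i j with hij | hij
        · rw [hij, Function.update_self]
          constructor
          · exact mul_nonneg (Nat.cast_nonneg n) (hf0 j hj)
          · calc (n:ℝ) * f j ≤ (n:ℝ) * (1/n) :=
                mul_le_mul_of_nonneg_left hjle (Nat.cast_nonneg n)
              _ = 1 := by field_simp
        · rw [Function.update_of_ne hij]; exact hP01 i
      · intro i hi
        have hij : i ≠ j := fun h => hi (h ▸ hj)
        rw [Function.update_of_ne hij]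
        exact hPout i (fun h => hi (Finset.mem_of_mem_erase h))
      · intro i hi
        rcases eq_or_ne i j with hij | hij
        · rw [hij, Function.update_self]; exact Finset.mem_of_mem_erase hk
        · rw [Function.update_of_ne hij]
          exact Finset.mem_of_mem_erase
            (halmem i (Finset.mem_erase.mpr ⟨hij, hi⟩))
      · intro j₀ hj₀
        rcases eq_or_ne j₀ j with hj₀j | hj₀j
        · -- target is j itself: filter is empty
          rw [hj₀j]
          have hfe : s.filter (fun i => Function.update al' j k i = j) = ∅ := by
            rw [Finset.filter_eq_empty_iff]
            intro i hi
            rcases eq_or_ne i j with hij | hij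
            · rw [hij, Function.update_self]
              exact hkj
            · rw [Function.update_of_ne hij]
              intro hcon
              have hi' : i ∈ s' := Finset.mem_erase.mpr ⟨hij, hi⟩
              exact hjs' (hcon ▸ halmem i hi')
          rw [hfe]
          simp only [Finset.sum_empty, add_zero, Function.update_self]
          field_simp
        · have hj₀s' : j₀ ∈ s' := Finset.mem_erase.mpr ⟨hj₀j, hj₀⟩
          have hfc : s'.filter (fun i => Function.update al' j k i = j₀)
              = s'.filter (fun i => al' i = j₀) := by
            apply Finset.filter_congr
            intro i hi
            have hij : i ≠ j := (Finset.mem_erase.mp hi).1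
            simp [Function.update_of_ne hij]
          have hfilter : s.filter (fun i => Function.update al' j k i = j₀)
              = (if k = j₀ then insert j (s'.filter (fun i => al' i = j₀))
                 else s'.filter (fun i => al' i = j₀)) := by
            rw [← hins, Finset.filter_insert, Function.update_self, hfc]
          have hterm : ∀ i ∈ s'.filter (fun i => al' i = j₀),
              (1 - Function.update prob' j ((n:ℝ) * f j) i) = 1 - prob' i := by
            intro i hi
            have hij : i ≠ j := (Finset.mem_erase.mp (Finset.mem_filter.mp hi).1).1
            rw [Function.update_of_ne hij]
          have hIH := hmain j₀ hj₀s'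
          rcases eq_or_ne k j₀ with hkj₀ | hkj₀
          · -- j₀ = k: filter gains the element j
            rw [hfilter, if_pos hkj₀, Finset.sum_insert (by
              intro hcon
              exact hjs' (Finset.mem_filter.mp hcon).1)]
            rw [Finset.sum_congr rfl hterm]
            rw [Function.update_self, Function.update_of_ne hj₀j]
            have hf'j₀ : f' j₀ = f j₀ + f j - 1/n := by
              rw [hf'def, ← hkj₀, Function.update_self, hkj₀]
            rw [hf'j₀] at hIH
            have hexp : (1:ℝ)/n * (1 - n * f j) = 1/n - f j := by
              field_simp
            calc (1:ℝ)/n * (prob' j₀ + (1 - n * f j +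
                    ∑ i ∈ s'.filter (fun i => al' i = j₀), (1 - prob' i)))
                = 1/n * (prob' j₀ + ∑ i ∈ s'.filter (fun i => al' i = j₀), (1 - prob' i))
                  + 1/n * (1 - n * f j) := by ring
              _ = (f j₀ + f j - 1/n) + (1/n - f j) := by rw [hIH, hexp]
              _ = f j₀ := by ring
          · rw [hfilter, if_neg hkj₀, Finset.sum_congr rfl hterm,
              Function.update_of_ne hj₀j]
            have hf'j₀ : f' j₀ = f j₀ := by
              rw [hf'def, Function.update_of_ne (Ne.symm hkj₀)]
            rw [hIH]
            exact hf'j₀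

/-- Alias method correctness: for a probability distribution `p` on
`Fin n` with `n ≥ 1`, there exist arrays `prob : Fin n → [0,1]` and
`alias : Fin n → Fin n` such that for every `j`,
`(1/n) · (prob j + ∑_{i : aliasTbl i = j} (1 - prob i)) = p j`, i.e. the alias-table
sampling procedure produces exactly the distribution `p`. -/
theorem alias_method_exists
    (n : ℕ) (hn : 1 ≤ n)
    (p : Fin n → ℝ) (hp0 : ∀ j, 0 ≤ p j) (hp1 : ∑ j, p j = 1) :
    ∃ (prob : Fin n → ℝ) (aliasTbl : Fin n → Fin n),
      (∀ i, prob i ∈ Set.Icc (0:ℝ) 1) ∧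
      ∀ j, (1 / (n : ℝ)) *
          (prob j + ∑ i ∈ Finset.univ.filter (fun i => aliasTbl i = j), (1 - prob i))
        = p j := by
  have hn' : (n:ℝ) ≠ 0 := Nat.cast_ne_zero.mpr (by omega)
  obtain ⟨prob, al, h01, _, _, hmain⟩ := alias_aux n hn n Finset.univ (by simp) p
    (fun i _ => hp0 i) (by rw [hp1]; simp [hn'])
  exact ⟨prob, al, h01, fun j => hmain j (Finset.mem_univ j)⟩
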